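/- arXiv:2110.07392 — 3 statements merged into one kernel-verified Lean document; each statement's English description precedes it below -/
import Mathlib

section
/- For the sequence α_t = (H+1)/(H+t) with H ≥ 1, define α_t^0 = ∏_{i=1}^t (1-α_i) and α_t^i = α_i ∏_{j=i+1}^t (1-α_j). Then for every t ≥ 1, 1/√t ≤ ∑_{i=1}^t α_t^i/√i ≤ 2/√t. -/
/-!
Unrolling the recursion `Q_t = (1 - α_t) Q_{t-1} + α_t x_t` gives the weights
`α_t^i = α_i ∏_{j=i+1}^t (1 - α_j)`, which satisfy `α_{t+1}^i = (1 - α_{t+1}) α_t^i` for `i ≤ t`.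
Since `α_1 = 1` they form a probability vector, so the average of the decreasing `1/√i` is at
least `1/√t`. The upper bound follows by induction on `t`: the step reduces to
`2 √t √(t+1) ≤ H + 2t + 1`, which is AM-GM.
-/

open Finset

/-- The paper's `α_t^i`. -/
noncomputable def weight (α : ℕ → ℝ) (t i : ℕ) : ℝ :=
  α i * ∏ j ∈ Icc (i + 1) t, (1 - α j)

/-- With `c = H` this is the paper's `α_i`. -/
noncomputable def stepSize (c : ℝ) (i : ℕ) : ℝ :=
  (c + 1) / (c + i)

section weight

variable (α : ℕ → ℝ)

theorem weight_self (t : ℕ) : weight α t t = α t := by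
  rw [weight, Icc_eq_empty (by omega), prod_empty, mul_one]

theorem weight_succ {t i : ℕ} (hi : i ≤ t) :
    weight α (t + 1) i = weight α t i * (1 - α (t + 1)) := by
  rw [weight, weight, prod_Icc_succ_top (by omega), mul_assoc]

theorem sum_weight_succ_mul (g : ℕ → ℝ) {t : ℕ} (ht : 1 ≤ t) :
    ∑ i ∈ Icc 1 (t + 1), weight α (t + 1) i * g i =
      α (t + 1) * g (t + 1) + (1 - α (t + 1)) * ∑ i ∈ Icc 1 t, weight α t i * g i := by
  rw [sum_Icc_succ_top (by omega), weight_self, mul_sum, add_comm]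
  congr 1
  refine sum_congr rfl fun i hi => ?_
  rw [weight_succ α (mem_Icc.1 hi).2]
  ring

theorem sum_weight_eq_one (hα : α 1 = 1) {t : ℕ} (ht : 1 ≤ t) :
    ∑ i ∈ Icc 1 t, weight α t i = 1 := by
  induction t, ht using Nat.le_induction with
  | base => simp [weight_self, hα]
  | succ t ht ih =>
    simpa [ih] using sum_weight_succ_mul α (fun _ => 1) ht

theorem weight_nonneg (hα : ∀ j, 1 ≤ j → α j ∈ Set.Icc 0 1) {t i : ℕ} (hi : 1 ≤ i) :
    0 ≤ weight α t i := by
  refine mul_nonneg (hα i hi).1 (prod_nonneg fun j hj => ?_)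
  linarith [(hα j (by simp only [mem_Icc] at hj; omega)).2]

theorem one_div_sqrt_le_sum_weight_div_sqrt (hα1 : α 1 = 1)
    (hα : ∀ j, 1 ≤ j → α j ∈ Set.Icc 0 1) {t : ℕ} (ht : 1 ≤ t) :
    1 / √t ≤ ∑ i ∈ Icc 1 t, weight α t i / √i := by
  rw [← sum_weight_eq_one α hα1 ht, sum_div]
  refine sum_le_sum fun i hi => ?_
  obtain ⟨hi1, hit⟩ := mem_Icc.1 hi
  refine div_le_div_of_nonneg_left (weight_nonneg α hα hi1) (by positivity) ?_
  exact Real.sqrt_le_sqrt (by exact_mod_cast hit)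

end weight

section stepSize

variable {c : ℝ} (hc : 0 ≤ c)
include hc

theorem stepSize_one : stepSize c 1 = 1 := by
  rw [stepSize, Nat.cast_one, div_self (by positivity)]

theorem stepSize_mem_Icc {j : ℕ} (hj : 1 ≤ j) : stepSize c j ∈ Set.Icc 0 1 := by
  have hj' : (1 : ℝ) ≤ j := by exact_mod_cast hj
  exact ⟨by unfold stepSize; positivity, div_le_one_of_le₀ (by linarith) (by positivity)⟩

/-- With `x = t` and `α = stepSize c (t + 1)` this is `α / √(t+1) + (1 - α) · 2/√t ≤ 2/√(t+1)`. -/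
theorem stepSize_div_sqrt_add_le {x : ℝ} (hx : 0 < x) :
    (c + 1) / (c + (x + 1)) / √(x + 1) + x / (c + (x + 1)) * (2 / √x) ≤ 2 / √(x + 1) := by
  have hs : 0 < √x := Real.sqrt_pos.2 hx
  have hs1 : 0 < √(x + 1) := Real.sqrt_pos.2 (by linarith)
  have amgm : 2 * (√x * √(x + 1)) ≤ 2 * x + 1 := by
    nlinarith [sq_nonneg (√x - √(x + 1)), Real.sq_sqrt hx.le, Real.sq_sqrt (by linarith : 0 ≤ x + 1)]
  have hx_sq : x = √x * √x := (Real.mul_self_sqrt hx.le).symm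
  field_simp
  nlinarith [mul_le_mul_of_nonneg_left amgm hs.le]

theorem sum_weight_stepSize_div_sqrt_le {t : ℕ} (ht : 1 ≤ t) :
    ∑ i ∈ Icc 1 t, weight (stepSize c) t i / √i ≤ 2 / √t := by
  simp only [div_eq_mul_inv]
  induction t, ht using Nat.le_induction with
  | base => norm_num [weight_self, stepSize_one hc]
  | succ t ht ih =>
    have ht' : (0 : ℝ) < t := by exact_mod_cast ht
    rw [sum_weight_succ_mul _ _ ht]
    have hα : 0 ≤ 1 - stepSize c (t + 1) := by
      linarith [(stepSize_mem_Icc hc (by omega : 1 ≤ t + 1)).2]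
    calc stepSize c (t + 1) * (√↑(t + 1))⁻¹ + (1 - stepSize c (t + 1)) *
          ∑ i ∈ Icc 1 t, weight (stepSize c) t i * (√i)⁻¹
        ≤ stepSize c (t + 1) * (√↑(t + 1))⁻¹ + (1 - stepSize c (t + 1)) * (2 * (√t)⁻¹) := by
          gcongr
      _ ≤ 2 * (√↑(t + 1))⁻¹ := by
          have key := stepSize_div_sqrt_add_le hc ht'
          have h1 : 1 - stepSize c (t + 1) = t / (c + (t + 1)) := by
            rw [stepSize, Nat.cast_succ]
            field_simp
            ring
          rw [h1, stepSize, Nat.cast_succ]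
          simpa only [div_eq_mul_inv] using key

end stepSize

theorem stmt0_general (H t : ℕ) (ht : 1 ≤ t) :
    1 / Real.sqrt t ≤
      ∑ i ∈ Finset.Icc 1 t,
        (((H : ℝ) + 1) / ((H : ℝ) + i) *
          ∏ j ∈ Finset.Icc (i + 1) t, (1 - ((H : ℝ) + 1) / ((H : ℝ) + j))) / Real.sqrt i ∧
    ∑ i ∈ Finset.Icc 1 t,
        (((H : ℝ) + 1) / ((H : ℝ) + i) *
          ∏ j ∈ Finset.Icc (i + 1) t, (1 - ((H : ℝ) + 1) / ((H : ℝ) + j))) / Real.sqrt i ≤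
      2 / Real.sqrt t := by
  have hH : (0 : ℝ) ≤ H := H.cast_nonneg
  exact ⟨one_div_sqrt_le_sum_weight_div_sqrt _ (stepSize_one hH)
      (fun _ => stepSize_mem_Icc hH) ht,
    sum_weight_stepSize_div_sqrt_le hH ht⟩

/-- For `α_i = (H+1)/(H+i)` with `H ≥ 1`, and weights
`α_t^i = α_i * ∏_{j=i+1}^t (1 - α_j)`, for every `t ≥ 1`,
`1/√t ≤ ∑_{i=1}^t α_t^i/√i ≤ 2/√t`. -/
theorem stmt0 (H t : ℕ) (hH : 1 ≤ H) (ht : 1 ≤ t) :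
    1 / Real.sqrt t ≤
      ∑ i ∈ Finset.Icc 1 t,
        (((H : ℝ) + 1) / ((H : ℝ) + i) *
          ∏ j ∈ Finset.Icc (i + 1) t, (1 - ((H : ℝ) + 1) / ((H : ℝ) + j))) / Real.sqrt i ∧
    ∑ i ∈ Finset.Icc 1 t,
        (((H : ℝ) + 1) / ((H : ℝ) + i) *
          ∏ j ∈ Finset.Icc (i + 1) t, (1 - ((H : ℝ) + 1) / ((H : ℝ) + j))) / Real.sqrt i ≤
      2 / Real.sqrt t :=
  stmt0_general H t ht
end

section
/- For the sequence α_t = (H+1)/(H+t) with H ≥ 1, define α_t^i = α_i ∏_{j=i+1}^t (1-α_j). Then for every t ≥ 1, max_{1 ≤ i ≤ t} α_t^i ≤ 2H/t. -/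
/-!
Write `α_j = (H+1)/(H+j)`. For `H ≥ 0` one has `α_t (1 - α_{t+1}) ≤ α_{t+1}`, so by induction on `t`
every weight `α_t^i` is at most the current step size `α_t`; and `α_t ≤ 2H/t` once `H ≥ 1`.
-/

open Finset

noncomputable def learningRate (H : ℝ) (j : ℕ) : ℝ := (H + 1) / (H + j)

variable {H : ℝ}

lemma one_sub_learningRate_succ (hH : 0 ≤ H) (t : ℕ) :
    1 - learningRate H (t + 1) = t / (H + (t + 1)) := by
  unfold learningRate
  have : 0 < H + ((t + 1 : ℕ) : ℝ) := by positivity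
  field_simp
  push_cast
  ring

lemma learningRate_mul_one_sub_le (hH : 0 ≤ H) {t : ℕ} (ht : 0 < t) :
    learningRate H t * (1 - learningRate H (t + 1)) ≤ learningRate H (t + 1) := by
  rw [one_sub_learningRate_succ hH, learningRate, learningRate, div_mul_div_comm]
  have ht' : (0 : ℝ) < t := by exact_mod_cast ht
  push_cast
  rw [div_le_div_iff₀ (by positivity) (by positivity)]
  have : (t : ℝ) ≤ H + t := by linarith
  have : 0 ≤ (H + 1) * (H + (t + 1)) := by positivity
  nlinarith

lemma learningRate_mul_prod_le (hH : 0 ≤ H) {i t : ℕ} (hi : 1 ≤ i) (hit : i ≤ t) :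
    learningRate H i * ∏ j ∈ Icc (i + 1) t, (1 - learningRate H j) ≤ learningRate H t := by
  induction t, hit using Nat.le_induction with
  | base => simp
  | succ t hit ih =>
    have hstep : 0 ≤ 1 - learningRate H (t + 1) := by
      rw [one_sub_learningRate_succ hH]
      positivity
    rw [prod_Icc_succ_top (by omega), ← mul_assoc]
    calc _ ≤ learningRate H t * (1 - learningRate H (t + 1)) :=
          mul_le_mul_of_nonneg_right ih hstep
      _ ≤ learningRate H (t + 1) := learningRate_mul_one_sub_le hH (by omega)

lemma learningRate_le (hH : 1 ≤ H) {t : ℕ} (ht : 0 < t) : learningRate H t ≤ 2 * H / t := by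
  have ht' : (1 : ℝ) ≤ t := by exact_mod_cast ht
  rw [learningRate, div_le_div_iff₀ (by positivity) (by positivity)]
  nlinarith

theorem stmt1_general (H t : ℕ) (hH : 1 ≤ H) :
    ∀ i : ℕ, 1 ≤ i → i ≤ t →
      ((H : ℝ) + 1) / ((H : ℝ) + i) *
          ∏ j ∈ Finset.Icc (i + 1) t, (1 - ((H : ℝ) + 1) / ((H : ℝ) + j)) ≤
        2 * (H : ℝ) / t := by
  intro i hi hit
  have hH' : (1 : ℝ) ≤ H := by exact_mod_cast hH
  exact (learningRate_mul_prod_le (by linarith) hi hit).trans (learningRate_le hH' (by omega))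

/-- For `α_i = (H+1)/(H+i)` with `H ≥ 1`, the weights
`α_t^i = α_i * ∏_{j=i+1}^t (1 - α_j)` satisfy `max_{1 ≤ i ≤ t} α_t^i ≤ 2H/t`. -/
theorem stmt1 (H t : ℕ) (hH : 1 ≤ H) (ht : 1 ≤ t) :
    ∀ i : ℕ, 1 ≤ i → i ≤ t →
      ((H : ℝ) + 1) / ((H : ℝ) + i) *
          ∏ j ∈ Finset.Icc (i + 1) t, (1 - ((H : ℝ) + 1) / ((H : ℝ) + j)) ≤
        2 * (H : ℝ) / t :=
  stmt1_general H t hH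
end

section
/- For the sequence α_t = (H+1)/(H+t) with H ≥ 1, define α_t^i = α_i ∏_{j=i+1}^t (1-α_j). Then for every i ≥ 1, the infinite series ∑_{t=i}^∞ α_t^i converges and equals 1 + 1/H. -/
open Finset Filter Topology

/-
Write `P t = ∏_{j=i+1}^t (1 - α_j)`. Since `1 - α_{t+1} = t / (H + t + 1)`, the sequence
`g t = (H + t) P t` satisfies `g (t + 1) = t P t`, so `H P t = g t - g (t + 1)` and the series
telescopes to `α_i / H * (g i - lim g) = (H + 1) / H`. For `H ≥ 1` one has `g (t + 1) ≤ t / (t + 1) * g t`,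
so `t g t` is bounded and `g t → 0`.
-/

theorem hasSum_sub_succ_of_tendsto {g : ℕ → ℝ} {l : ℝ} (hg : ∀ n, g (n + 1) ≤ g n)
    (hlim : Tendsto g atTop (𝓝 l)) : HasSum (fun n => g n - g (n + 1)) (g 0 - l) := by
  rw [hasSum_iff_tendsto_nat_of_nonneg (fun n => sub_nonneg.2 (hg n))]
  simpa only [sum_range_sub'] using tendsto_const_nhds.sub hlim

noncomputable def rateProd (H : ℝ) (i t : ℕ) : ℝ := ∏ j ∈ Icc (i + 1) t, (1 - (H + 1) / (H + j))

section

variable {H : ℝ} {i t : ℕ}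

@[simp]
theorem rateProd_self : rateProd H i i = 1 := by
  simp [rateProd]

theorem rateProd_nonneg (hH : 0 ≤ H) : 0 ≤ rateProd H i t := by
  refine prod_nonneg fun j hj => sub_nonneg.2 (div_le_one_of_le₀ ?_ (by positivity))
  have : (1 : ℝ) ≤ j := by exact_mod_cast (Nat.le_add_left 1 i).trans (mem_Icc.1 hj).1
  linarith

theorem add_mul_rateProd_succ (hH : 0 ≤ H) (hit : i ≤ t) :
    (H + (t + 1)) * rateProd H i (t + 1) = t * rateProd H i t := by
  have hpos : 0 < H + (t + 1) := by positivity
  rw [rateProd, prod_Icc_succ_top (by omega), ← rateProd]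
  push_cast
  field_simp
  ring

theorem natCast_mul_add_mul_rateProd_le (hH : 1 ≤ H) (hit : i ≤ t) :
    t * ((H + t) * rateProd H i t) ≤ i * (H + i) := by
  induction t, hit using Nat.le_induction with
  | base => simp
  | succ t hit ih =>
    calc ((t + 1 : ℕ) : ℝ) * ((H + (t + 1 : ℕ)) * rateProd H i (t + 1))
        = (t + 1) * (t * rateProd H i t) := by
          push_cast
          rw [add_mul_rateProd_succ (by linarith) hit]
      _ ≤ (H + t) * (t * rateProd H i t) :=
          mul_le_mul_of_nonneg_right (by linarith)
            (mul_nonneg t.cast_nonneg (rateProd_nonneg (by linarith)))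
      _ = t * ((H + t) * rateProd H i t) := by ring
      _ ≤ i * (H + i) := ih

theorem tendsto_add_mul_rateProd (hH : 1 ≤ H) (i : ℕ) :
    Tendsto (fun t : ℕ => (H + t) * rateProd H i t) atTop (𝓝 0) := by
  refine squeeze_zero' (Eventually.of_forall fun t =>
    mul_nonneg (by positivity) (rateProd_nonneg (by linarith)))
    ?_ (tendsto_const_div_atTop_nhds_zero_nat (i * (H + i)))
  filter_upwards [eventually_ge_atTop (max i 1)] with t ht
  have ht0 : (0 : ℝ) < t := by exact_mod_cast (le_max_right i 1).trans ht
  rw [le_div_iff₀ ht0, mul_comm]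
  exact natCast_mul_add_mul_rateProd_le hH ((le_max_left i 1).trans ht)

theorem hasSum_rate_weights (hH : 1 ≤ H) (i : ℕ) :
    HasSum (fun t : ℕ => if i ≤ t then (H + 1) / (H + i) * rateProd H i t else 0)
      (1 + 1 / H) := by
  have hH0 : 0 < H := by linarith
  have hdiff : ∀ n : ℕ, (H + (n + i : ℕ)) * rateProd H i (n + i)
      - (H + (n + 1 + i : ℕ)) * rateProd H i (n + 1 + i) = H * rateProd H i (n + i) := by
    intro n
    rw [Nat.add_right_comm, Nat.cast_succ, add_mul_rateProd_succ hH0.le (Nat.le_add_left i n)]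
    ring
  have hsum := hasSum_sub_succ_of_tendsto
    (fun n => sub_nonneg.1 <| (hdiff n).symm ▸ mul_nonneg hH0.le (rateProd_nonneg hH0.le))
    ((tendsto_add_mul_rateProd hH i).comp (tendsto_add_atTop_nat i))
  simp only [Function.comp_def, hdiff, zero_add, rateProd_self, sub_zero] at hsum
  rw [← hasSum_nat_add_iff' i, sum_eq_zero fun t ht => if_neg (by simpa using ht), sub_zero]
  have hval : (H + 1) / (H + i) / H * ((H + i) * 1) = 1 + 1 / H := by
    have : H + i ≠ 0 := by positivity
    field_simp
  refine hval ▸ (hsum.mul_left ((H + 1) / (H + i) / H)).congr_fun fun n => ?_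
  rw [if_pos (Nat.le_add_left i n)]
  field_simp

end

theorem stmt3_general (H i : ℕ) (hH : 1 ≤ H) :
    HasSum
      (fun t : ℕ =>
        if i ≤ t then
          ((H : ℝ) + 1) / ((H : ℝ) + i) *
            ∏ j ∈ Finset.Icc (i + 1) t, (1 - ((H : ℝ) + 1) / ((H : ℝ) + j))
        else 0)
      (1 + 1 / (H : ℝ)) :=
  hasSum_rate_weights (by exact_mod_cast hH) i

/-- For `α_i = (H+1)/(H+i)` with `H ≥ 1` and weights
`α_t^i = α_i * ∏_{j=i+1}^t (1 - α_j)` (for `t ≥ i`, and `0` for `t < i`),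
the series `∑_{t=i}^∞ α_t^i` converges to `1 + 1/H`, for every `i ≥ 1`. -/
theorem stmt3 (H i : ℕ) (hH : 1 ≤ H) (hi : 1 ≤ i) :
    HasSum
      (fun t : ℕ =>
        if i ≤ t then
          ((H : ℝ) + 1) / ((H : ℝ) + i) *
            ∏ j ∈ Finset.Icc (i + 1) t, (1 - ((H : ℝ) + 1) / ((H : ℝ) + j))
        else 0)
      (1 + 1 / (H : ℝ)) :=
  stmt3_general H i hH
end
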